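/- Let z_τ : [t_{i-1},t_i] → ℝ^d be a polynomial of degree ≤ k solving the cPG scheme ∫_{t_{i-1}}^{t_i} ⟨∂ₜ z_τ, φ⟩ dt = Q_i[⟨J(Π η(z_τ)) - R(Π η(z_τ)) + B(·, Π η(z_τ)), φ⟩] for all polynomials φ of degree ≤ k-1, where Q_i is a quadrature with positive weights, ⟨J(v),v⟩ = 0 and ⟨R(v),v⟩ ≥ 0 for all v, and Π is the L²-projection to degree ≤ k-1. Then H(z_τ(t_i)) - H(z_τ(t_{i-1})) = Q_i[-⟨R(Π η(z_τ)), Π η(z_τ)⟩ + ⟨B(·, Π η(z_τ)), Π η(z_τ)⟩] ≤ Q_i[⟨B(·, Π η(z_τ)), Π η(z_τ)⟩]. -/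

import Mathlib

/-!
By the chain rule and the fundamental theorem of calculus, the energy change over the step is
`∫ ⟪η (z s), ż s⟫`. As `ż` has degree `≤ k - 1`, the orthogonality of `η ∘ z - Πη` to such
polynomials replaces `η ∘ z` by `Πη`; and `Πη` is itself an admissible test function, so the
scheme turns the integral into the quadrature of `⟪J v - R v + B v, v⟫` at `v = Πη`. The skew
term vanishes, and positivity of `R`, the weights and the step length gives the inequality.
-/

open MeasureTheory RealInnerProductSpace

section PolynomialCurve

variable {E : Type*} [NormedAddCommGroup E] [NormedSpace ℝ E]

theorem continuous_sum_pow_smul {n : ℕ} (a : Fin n → E) :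
    Continuous fun s : ℝ => ∑ j : Fin n, s ^ (j : ℕ) • a j :=
  continuous_finsetSum _ fun _ _ => (continuous_pow _).smul continuous_const

theorem hasDerivAt_sum_pow_smul {n : ℕ} (a : Fin (n + 1) → E) (s : ℝ) :
    HasDerivAt (fun s : ℝ => ∑ j : Fin (n + 1), s ^ (j : ℕ) • a j)
      (∑ j : Fin n, s ^ (j : ℕ) • (((j : ℕ) + 1 : ℝ) • a j.succ)) s := by
  convert HasDerivAt.fun_sum (u := Finset.univ) fun (j : Fin (n + 1)) _ =>
    (hasDerivAt_pow (j : ℕ) s).smul_const (a j) using 1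
  rw [Fin.sum_univ_succ]
  simp [smul_smul, mul_comm]

theorem differentiable_sum_pow_smul {n : ℕ} (a : Fin (n + 1) → E) :
    Differentiable ℝ fun s : ℝ => ∑ j : Fin (n + 1), s ^ (j : ℕ) • a j :=
  fun s => (hasDerivAt_sum_pow_smul a s).differentiableAt

theorem deriv_sum_pow_smul {n : ℕ} (a : Fin (n + 1) → E) :
    deriv (fun s : ℝ => ∑ j : Fin (n + 1), s ^ (j : ℕ) • a j) =
      fun s => ∑ j : Fin n, s ^ (j : ℕ) • (((j : ℕ) + 1 : ℝ) • a j.succ) :=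
  funext fun s => (hasDerivAt_sum_pow_smul a s).deriv

end PolynomialCurve

section EnergyAlongCurve

variable {F : Type*} [NormedAddCommGroup F] [InnerProductSpace ℝ F]

theorem integral_inner_eq_of_integral_inner_sub_eq_zero {f g w : ℝ → F} {a b : ℝ}
    (hf : Continuous f) (hg : Continuous g) (hw : Continuous w)
    (h : ∫ s in a..b, ⟪f s - g s, w s⟫ = 0) :
    ∫ s in a..b, ⟪f s, w s⟫ = ∫ s in a..b, ⟪g s, w s⟫ := by
  simp_rw [inner_sub_left] at h
  rwa [intervalIntegral.integral_sub ((hf.inner hw).intervalIntegrable _ _)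
    ((hg.inner hw).intervalIntegrable _ _), sub_eq_zero] at h

variable [CompleteSpace F] {H : F → ℝ}

theorem ContDiff.continuous_gradient (hH : ContDiff ℝ 1 H) : Continuous (gradient H) :=
  (InnerProductSpace.toDual ℝ F).symm.continuous.comp (hH.continuous_fderiv one_ne_zero)

theorem HasGradientAt.comp_hasDerivAt {z : ℝ → F} {g z' : F} {s : ℝ}
    (hH : HasGradientAt H g (z s)) (hz : HasDerivAt z z' s) :
    HasDerivAt (H ∘ z) ⟪g, z'⟫ s := by
  simpa using hH.hasFDerivAt.comp_hasDerivAt s hz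

theorem sub_eq_integral_inner_gradient_deriv (hH : ContDiff ℝ 1 H) {z : ℝ → F}
    (hz : Differentiable ℝ z) (hz' : Continuous (deriv z)) (a b : ℝ) :
    H (z b) - H (z a) = ∫ s in a..b, ⟪gradient H (z s), deriv z s⟫ := by
  refine (intervalIntegral.integral_eq_sub_of_hasDerivAt (f := H ∘ z) (fun s _ => ?_) ?_).symm
  · exact ((hH.differentiable one_ne_zero _).hasGradientAt).comp_hasDerivAt (hz s).hasDerivAt
  · exact ((hH.continuous_gradient.comp hz.continuous).inner hz').intervalIntegrable a b

end EnergyAlongCurve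

theorem cPG_discrete_energy_balance_general {d k sQ : ℕ}
    (t₀ t₁ : ℝ) (hlt : t₀ < t₁)
    (ω : Fin sQ → ℝ) (hω : ∀ j, 0 < ω j)
    (ζ : Fin sQ → ℝ)
    (H : EuclideanSpace ℝ (Fin d) → ℝ) (hH : ContDiff ℝ 1 H)
    (η : EuclideanSpace ℝ (Fin d) → EuclideanSpace ℝ (Fin d)) (hη : η = gradient H)
    (J R : EuclideanSpace ℝ (Fin d) → EuclideanSpace ℝ (Fin d))
    (hJ : ∀ v, ⟪J v, v⟫ = 0) (hR : ∀ v, 0 ≤ ⟪R v, v⟫)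
    (B : ℝ → EuclideanSpace ℝ (Fin d) → EuclideanSpace ℝ (Fin d))
    (z Pη : ℝ → EuclideanSpace ℝ (Fin d))
    -- z is a polynomial of degree ≤ k
    (hz : ∃ a : Fin (k + 1) → EuclideanSpace ℝ (Fin d),
      ∀ s, z s = ∑ j : Fin (k + 1), s ^ (j : ℕ) • a j)
    -- Pη is a polynomial of degree ≤ k-1
    (hPη : ∃ c : Fin k → EuclideanSpace ℝ (Fin d),
      ∀ s, Pη s = ∑ j : Fin k, s ^ (j : ℕ) • c j)
    -- Pη is the L²-projection of η ∘ z onto polynomials of degree ≤ k-1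
    (horth : ∀ c : Fin k → EuclideanSpace ℝ (Fin d),
      ∫ s in t₀..t₁, ⟪η (z s) - Pη s, ∑ j : Fin k, s ^ (j : ℕ) • c j⟫ = 0)
    -- z solves the cPG scheme for all test polynomials of degree ≤ k-1
    (hscheme : ∀ c : Fin k → EuclideanSpace ℝ (Fin d),
      ∫ s in t₀..t₁, ⟪deriv z s, ∑ j : Fin k, s ^ (j : ℕ) • c j⟫
        = (t₁ - t₀) * ∑ i, ω i *
            ⟪J (Pη (ζ i)) - R (Pη (ζ i)) + B (ζ i) (Pη (ζ i)),
              ∑ j : Fin k, (ζ i) ^ (j : ℕ) • c j⟫) :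
    H (z t₁) - H (z t₀)
      = (t₁ - t₀) * ∑ i, ω i *
          (-⟪R (Pη (ζ i)), Pη (ζ i)⟫ + ⟪B (ζ i) (Pη (ζ i)), Pη (ζ i)⟫) ∧
    H (z t₁) - H (z t₀)
      ≤ (t₁ - t₀) * ∑ i, ω i * ⟪B (ζ i) (Pη (ζ i)), Pη (ζ i)⟫ := by
  obtain ⟨a, ha⟩ := hz
  obtain ⟨c, hc⟩ := hPη
  have hz_diff : Differentiable ℝ z := by
    rw [funext ha]; exact differentiable_sum_pow_smul a
  have hderiv : deriv z = fun s => ∑ j : Fin k, s ^ (j : ℕ) • (((j : ℕ) + 1 : ℝ) • a j.succ) := by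
    rw [funext ha]; exact deriv_sum_pow_smul a
  have hderiv_cont : Continuous (deriv z) := hderiv ▸ continuous_sum_pow_smul _
  have henergy : H (z t₁) - H (z t₀) = ∫ s in t₀..t₁, ⟪Pη s, deriv z s⟫ := by
    rw [sub_eq_integral_inner_gradient_deriv hH hz_diff hderiv_cont, ← hη]
    refine integral_inner_eq_of_integral_inner_sub_eq_zero
      ((hη ▸ hH.continuous_gradient).comp hz_diff.continuous)
      (funext hc ▸ continuous_sum_pow_smul c) hderiv_cont ?_
    simpa only [hderiv] using horth _
  have hbalance : H (z t₁) - H (z t₀) = (t₁ - t₀) * ∑ i, ω i *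
      (-⟪R (Pη (ζ i)), Pη (ζ i)⟫ + ⟪B (ζ i) (Pη (ζ i)), Pη (ζ i)⟫) := by
    calc H (z t₁) - H (z t₀)
        = ∫ s in t₀..t₁, ⟪deriv z s, ∑ j : Fin k, s ^ (j : ℕ) • c j⟫ := by
          simp_rw [henergy, ← hc, real_inner_comm]
      _ = _ := hscheme c
      _ = _ := by simp_rw [← hc, inner_add_left, inner_sub_left, hJ, zero_sub]
  refine ⟨hbalance, hbalance ▸ ?_⟩
  gcongr (t₁ - t₀) * ∑ i, ω i * ?_ with i
  · exact (hω i).le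
  · linarith [hR (Pη (ζ i))]

/-- Discrete energy consistency of the modified continuous Petrov--Galerkin
scheme on one time step `[t₀, t₁]`, with quadrature
`Q_i g = (t₁ - t₀) * ∑ j, ω j * g (ζ j)` (positive weights summing to 1). -/
theorem cPG_discrete_energy_balance {d k sQ : ℕ} (hk : 1 ≤ k)
    (t₀ t₁ : ℝ) (hlt : t₀ < t₁)
    (ω : Fin sQ → ℝ) (hω : ∀ j, 0 < ω j) (hωsum : ∑ j, ω j = 1)
    (ζ : Fin sQ → ℝ) (hζ : ∀ j, ζ j ∈ Set.Icc t₀ t₁)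
    (H : EuclideanSpace ℝ (Fin d) → ℝ) (hH : ContDiff ℝ 1 H)
    (η : EuclideanSpace ℝ (Fin d) → EuclideanSpace ℝ (Fin d)) (hη : η = gradient H)
    (J R : EuclideanSpace ℝ (Fin d) → EuclideanSpace ℝ (Fin d))
    (hJ : ∀ v, ⟪J v, v⟫ = 0) (hR : ∀ v, 0 ≤ ⟪R v, v⟫)
    (B : ℝ → EuclideanSpace ℝ (Fin d) → EuclideanSpace ℝ (Fin d))
    (z Pη : ℝ → EuclideanSpace ℝ (Fin d))
    -- z is a polynomial of degree ≤ k
    (hz : ∃ a : Fin (k + 1) → EuclideanSpace ℝ (Fin d),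
      ∀ s, z s = ∑ j : Fin (k + 1), s ^ (j : ℕ) • a j)
    -- Pη is a polynomial of degree ≤ k-1
    (hPη : ∃ c : Fin k → EuclideanSpace ℝ (Fin d),
      ∀ s, Pη s = ∑ j : Fin k, s ^ (j : ℕ) • c j)
    -- Pη is the L²-projection of η ∘ z onto polynomials of degree ≤ k-1
    (horth : ∀ c : Fin k → EuclideanSpace ℝ (Fin d),
      ∫ s in t₀..t₁, ⟪η (z s) - Pη s, ∑ j : Fin k, s ^ (j : ℕ) • c j⟫ = 0)
    -- z solves the cPG scheme for all test polynomials of degree ≤ k-1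
    (hscheme : ∀ c : Fin k → EuclideanSpace ℝ (Fin d),
      ∫ s in t₀..t₁, ⟪deriv z s, ∑ j : Fin k, s ^ (j : ℕ) • c j⟫
        = (t₁ - t₀) * ∑ i, ω i *
            ⟪J (Pη (ζ i)) - R (Pη (ζ i)) + B (ζ i) (Pη (ζ i)),
              ∑ j : Fin k, (ζ i) ^ (j : ℕ) • c j⟫) :
    H (z t₁) - H (z t₀)
      = (t₁ - t₀) * ∑ i, ω i *
          (-⟪R (Pη (ζ i)), Pη (ζ i)⟫ + ⟪B (ζ i) (Pη (ζ i)), Pη (ζ i)⟫) ∧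
    H (z t₁) - H (z t₀)
      ≤ (t₁ - t₀) * ∑ i, ω i * ⟪B (ζ i) (Pη (ζ i)), Pη (ζ i)⟫ :=
  cPG_discrete_energy_balance_general t₀ t₁ hlt ω hω ζ H hH η hη J R hJ hR B z Pη hz hPη horth
    hscheme
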